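/- Let f : {-1,1}^n → {0,1} be a monotone DNF f = T₁ ∨ ⋯ ∨ T_s (all literals positive), let S ⊆ [n], and suppose x_{S̄} is an assignment of the variables outside S such that the restriction f_{S|x_{S̄}} has decision tree depth |S|. Then setting every variable of S to true yields a full input x with the property that every variable of S lies in some term of f satisfied by x. -/

import Mathlib

open Finset

noncomputable section

/-- The character `χ_S(x) = ∏_{i ∈ S} x_i`, where `x i = true` encodes `-1`. -/
def chi {n : ℕ} (S : Finset (Fin n)) (x : Fin n → Bool) : ℝ :=
  ∏ i ∈ S, (if x i then (-1 : ℝ) else 1)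

/-- Fourier coefficient `f̂(S) = E_x [f(x) χ_S(x)]` over uniform `x ∈ {-1,1}^n`. -/
def fhat {n : ℕ} (f : (Fin n → Bool) → ℝ) (S : Finset (Fin n)) : ℝ :=
  (∑ x : Fin n → Bool, f x * chi S x) / 2 ^ n

/-- View a `{0,1}`-valued Boolean function as real-valued. -/
def bToR (b : Bool) : ℝ := if b then 1 else 0

open scoped Classical in
/-- Probability of an event under the uniform distribution on `{-1,1}^n`. -/
def pr {n : ℕ} (P : (Fin n → Bool) → Prop) : ℝ :=
  ((Finset.univ.filter P).card : ℝ) / 2 ^ n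

end
/-- Binary decision trees querying variables in `Fin n`. -/
inductive DTree (n : ℕ) : Type where
  | leaf : Bool → DTree n
  | node : Fin n → DTree n → DTree n → DTree n

def DTree.eval {n : ℕ} : DTree n → (Fin n → Bool) → Bool
  | .leaf b, _ => b
  | .node i t₁ t₀, x => if x i then t₁.eval x else t₀.eval x

def DTree.depth {n : ℕ} : DTree n → ℕ
  | .leaf _ => 0
  | .node _ t₁ t₀ => max t₁.depth t₀.depth + 1

/-- Decision tree depth of a Boolean function: least depth of a tree computing it. -/
noncomputable def DT {n : ℕ} (g : (Fin n → Bool) → Bool) : ℕ :=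
  sInf {d | ∃ t : DTree n, (∀ x, t.eval x = g x) ∧ t.depth ≤ d}

/-- Restriction of `f` with free variables `S`, the others fixed according to `xbar`. -/
def restrict {n : ℕ} (f : (Fin n → Bool) → Bool) (S : Finset (Fin n))
    (xbar : Fin n → Bool) : (Fin n → Bool) → Bool :=
  fun xS => f (fun i => if i ∈ S then xS i else xbar i)

/-! Every `i ∈ S` is relevant to the restriction `g := f_{S|x̄}`: otherwise querying the other
variables of `S` would compute `g` with depth `|S| - 1`. So some `y` flips `g` when `y i` flips,
and since a monotone DNF is monotone, it flips from `false` to `true`. The term satisfied after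
the flip must contain `i`, as it was not satisfied before; its variables in `S` are true under
the all-true setting of `S`, and those outside `S` are true under `x̄`. -/

open Function

theorem DTree.exists_depth_le_card_of_dependsOn {n : ℕ} {g : (Fin n → Bool) → Bool}
    {T : Finset (Fin n)} (hg : DependsOn g T) :
    ∃ t : DTree n, (∀ x, t.eval x = g x) ∧ t.depth ≤ T.card := by
  classical
  induction T using Finset.induction_on generalizing g with
  | empty =>
    exact ⟨.leaf (g fun _ => false), fun x => hg (by simp), le_rfl⟩
  | @insert a T ha ih =>
    have hslice (b : Bool) : DependsOn (fun x => g (update x a b)) T := by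
      intro x y hxy
      refine hg fun j hj => ?_
      by_cases hja : j = a
      · simp [hja]
      · simpa [hja] using hxy j (by simpa [hja] using hj)
    obtain ⟨t₁, ht₁, hd₁⟩ := ih (hslice true)
    obtain ⟨t₀, ht₀, hd₀⟩ := ih (hslice false)
    refine ⟨.node a t₁ t₀, fun x => ?_, ?_⟩
    · conv_rhs => rw [← update_eq_self a x]
      cases hxa : x a <;> simp [DTree.eval, hxa, ht₁, ht₀]
    · simp only [DTree.depth, card_insert_of_notMem ha]
      omega

theorem DT_le_card_of_dependsOn {n : ℕ} {g : (Fin n → Bool) → Bool} {T : Finset (Fin n)}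
    (hg : DependsOn g T) : DT g ≤ T.card :=
  let ⟨t, ht, hd⟩ := DTree.exists_depth_le_card_of_dependsOn hg
  Nat.sInf_le ⟨t, ht, hd⟩

theorem DependsOn.erase_of_update_eq {n : ℕ} {g : (Fin n → Bool) → Bool} {S : Finset (Fin n)}
    {i : Fin n} (hg : DependsOn g S)
    (hi : ∀ y, g (Function.update y i true) = g (Function.update y i false)) :
    DependsOn g (S.erase i) := by
  have hreset (x : Fin n → Bool) : g x = g (Function.update x i false) := by
    conv_lhs => rw [← Function.update_eq_self i x]
    cases x i
    · rfl
    · exact hi x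
  intro x y hxy
  rw [hreset x, hreset y]
  refine hg fun j hj => ?_
  by_cases hji : j = i
  · simp [hji]
  · simpa [hji] using hxy j (by simpa [hji] using hj)

theorem exists_update_ne_of_DT_eq_card {n : ℕ} {g : (Fin n → Bool) → Bool} {S : Finset (Fin n)}
    (hg : DependsOn g S) (hDT : DT g = S.card) {i : Fin n} (hi : i ∈ S) :
    ∃ y, g (update y i true) ≠ g (update y i false) := by
  by_contra! h
  have hle := DT_le_card_of_dependsOn (hg.erase_of_update_eq h)
  have hpos := card_pos.mpr ⟨i, hi⟩
  rw [card_erase_of_mem hi] at hle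
  omega

theorem Monotone.eq_true_and_eq_false_of_update_ne {n : ℕ} {g : (Fin n → Bool) → Bool}
    (hg : Monotone g) {y : Fin n → Bool} {i : Fin n}
    (hy : g (update y i true) ≠ g (update y i false)) :
    g (update y i true) = true ∧ g (update y i false) = false := by
  have hle : g (update y i false) ≤ g (update y i true) := hg (by simp)
  revert hy hle
  cases g (update y i true) <;> cases g (update y i false) <;> decide

theorem restrict_dependsOn {n : ℕ} (f : (Fin n → Bool) → Bool) (S : Finset (Fin n))
    (xbar : Fin n → Bool) : DependsOn (restrict f S xbar) S := by
  intro x y hxy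
  unfold _root_.restrict
  congr 1
  funext i
  split_ifs with hi
  · exact hxy i hi
  · rfl

theorem monotone_restrict {n : ℕ} {f : (Fin n → Bool) → Bool} (hf : Monotone f)
    (S : Finset (Fin n)) (xbar : Fin n → Bool) : Monotone (_root_.restrict f S xbar) := by
  intro x y hxy
  refine hf fun i => ?_
  split_ifs
  · exact hxy i
  · rfl

section MonotoneDNF

variable {n s : ℕ} {f : (Fin n → Bool) → Bool} {terms : Fin s → Finset (Fin n)}

theorem monotone_of_dnf (hf : ∀ x, f x = true ↔ ∃ j, ∀ i ∈ terms j, x i = true) :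
    Monotone f := by
  intro x y hxy
  rw [Bool.le_iff_imp, hf, hf]
  rintro ⟨j, hj⟩
  exact ⟨j, fun i hi => Bool.le_iff_imp.mp (hxy i) (hj i hi)⟩

theorem exists_mem_term_of_update (hf : ∀ x, f x = true ↔ ∃ j, ∀ i ∈ terms j, x i = true)
    {u v : Fin n → Bool} {i : Fin n} (huv : ∀ i' ≠ i, u i' = v i') (hu : f u = true)
    (hv : f v = false) : ∃ j, i ∈ terms j ∧ ∀ i' ∈ terms j, u i' = true := by
  obtain ⟨j, hj⟩ := (hf u).mp hu
  refine ⟨j, by_contra fun hij => ?_, hj⟩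
  have hv' : f v = true :=
    (hf v).mpr ⟨j, fun i' hi' => huv i' (ne_of_mem_of_not_mem hi' hij) ▸ hj i' hi'⟩
  simp [hv] at hv'

end MonotoneDNF

/-- For a monotone DNF (terms are sets of positively occurring
variables), if the restriction of `f` to free variables `S` at `xbar` has full decision
tree depth `|S|`, then setting every variable of `S` to true yields an input under which
every variable of `S` lies in a satisfied term. -/
theorem stmt19 {n s : ℕ} (f : (Fin n → Bool) → Bool) (terms : Fin s → Finset (Fin n))
    (hf : ∀ x, f x = true ↔ ∃ j, ∀ i ∈ terms j, x i = true)
    (S : Finset (Fin n)) (xbar : Fin n → Bool)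
    (hDT : DT (restrict f S xbar) = S.card) :
    ∀ i ∈ S, ∃ j, i ∈ terms j ∧
      ∀ i' ∈ terms j, (if i' ∈ S then true else xbar i') = true := by
  intro i hi
  obtain ⟨y, hy⟩ := exists_update_ne_of_DT_eq_card (restrict_dependsOn f S xbar) hDT hi
  obtain ⟨htrue, hfalse⟩ :=
    (monotone_restrict (monotone_of_dnf hf) S xbar).eq_true_and_eq_false_of_update_ne hy
  have hoff : ∀ i' ≠ i, (if i' ∈ S then update y i true i' else xbar i') =
      (if i' ∈ S then update y i false i' else xbar i') := fun i' h => by simp [h]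
  obtain ⟨j, hij, hj⟩ := exists_mem_term_of_update hf hoff htrue hfalse
  refine ⟨j, hij, fun i' hi' => ?_⟩
  by_cases hi'S : i' ∈ S
  · simp [hi'S]
  · simpa [hi'S] using hj i' hi'
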